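/- Let M = (Q, s, Δ) be a finite automaton over the binary alphabet and let x ∈ {0,1}^ω. Suppose that for every q ∈ Q_inf(x), x^{(q)} is neither weakly sparse nor co-weakly sparse. Then every q ∈ Q_inf(x) is frequent on x: there exist α > 0 and β > 0 such that for all T ∈ ℕ, |{t ∈ {0,1,…,T−1} : q_t(x) = q}| ≥ α·T − β. -/

import Mathlib

/-!
Write `v_q(T)` for the number of visits to `q` before time `T`, and `f ≼ g` when
`f ≤ K * (g + 1)` for some `K`; this is a preorder. If `x^{(q)}` is neither weakly sparse nor
co-weakly sparse, each bit `b` is read at a positive proportion of the visits to `q`, and each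
such reading is followed by a visit to `Δ q b`; hence `v_q ≼ v_{Δ q b}`, so `Δ q b` is again
visited infinitely often. Following the run from a visit of `q'` to a later visit of `q` gives
`v_{q'} ≼ v_q` for all infinitely visited `q'` and `q`, while finitely visited states have bounded
counts. Summing over `Q`, `T = ∑ q', v_{q'}(T) ≼ v_q(T)`.
-/

/-- `cars x t` is `N_t(x) = x_1 + ⋯ + x_t` (sequences are 0-indexed: `x i` is `x_{i+1}`). -/
def cars (x : ℕ → Bool) (t : ℕ) : ℕ :=
  ((Finset.range t).filter (fun i => x i = true)).card

/-- `x` is weakly sparse if `lim_{s→∞} inf_{t ≥ s} N_t(x)/t = 0`. -/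
def weaklySparse (x : ℕ → Bool) : Prop :=
  Filter.liminf (fun t : ℕ => (cars x t : ℝ) / t) Filter.atTop = 0

/-- The state of the automaton with transition function `Δ` and start state `s`
after reading `t` bits of `x`: `q_0(x) = s`, `q_{t+1}(x) = Δ(q_t(x), x_{t+1})`. -/
def autoRun {Q : Type*} (Δ : Q → Bool → Q) (s : Q) (x : ℕ → Bool) : ℕ → Q
  | 0 => s
  | t + 1 => Δ (autoRun Δ s x t) (x t)

/-- The subsequence `x^{(q)}` of `x` recording, for each visit of the automaton to state
`q`, the bit read immediately after that visit: if `V_q(x) = {t(1) < t(2) < ⋯}` then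
`x^{(q)}_i = x_{t(i)+1}` (in 0-indexed form, `x^{(q)} i = x (t(i+1))`, using `Nat.nth` to
enumerate `V_q(x)`). -/
noncomputable def subseqAt {Q : Type*} (Δ : Q → Bool → Q) (s : Q) (x : ℕ → Bool)
    (q : Q) : ℕ → Bool :=
  fun i => x (Nat.nth (fun t => autoRun Δ s x t = q) i)

open Filter Finset

def LinearlyBounded (f g : ℕ → ℕ) : Prop :=
  ∃ K : ℕ, ∀ n, f n ≤ K * (g n + 1)

namespace LinearlyBounded

variable {f g h : ℕ → ℕ}

theorem of_le_add (c : ℕ) (hfg : ∀ n, f n ≤ g n + c) : LinearlyBounded f g :=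
  ⟨c + 1, fun n => (hfg n).trans (by nlinarith)⟩

theorem refl (f : ℕ → ℕ) : LinearlyBounded f f :=
  of_le_add 0 fun _ => le_rfl

theorem trans (hfg : LinearlyBounded f g) (hgh : LinearlyBounded g h) : LinearlyBounded f h := by
  obtain ⟨K, hK⟩ := hfg
  obtain ⟨L, hL⟩ := hgh
  refine ⟨K * (L + 1), fun n => ?_⟩
  calc f n ≤ K * (g n + 1) := hK n
    _ ≤ K * (L * (h n + 1) + 1) := by gcongr; exact hL n
    _ ≤ K * (L + 1) * (h n + 1) := by nlinarith

theorem comp (hfg : LinearlyBounded f g) (k : ℕ → ℕ) : LinearlyBounded (f ∘ k) (g ∘ k) :=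
  hfg.imp fun _ hK n => hK (k n)

theorem sum {ι : Type*} (s : Finset ι) {f : ι → ℕ → ℕ} (hf : ∀ i ∈ s, LinearlyBounded (f i) g) :
    LinearlyBounded (fun n => ∑ i ∈ s, f i n) g := by
  choose! K hK using hf
  exact ⟨∑ i ∈ s, K i, fun n => by rw [Finset.sum_mul]; exact Finset.sum_le_sum fun i hi => hK i hi n⟩

theorem infinite_setOf {p r : ℕ → Prop} [DecidablePred p] [DecidablePred r]
    (hpr : LinearlyBounded (Nat.count p) (Nat.count r)) (hp : {n | p n}.Infinite) :
    {n | r n}.Infinite := by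
  intro hr
  obtain ⟨K, hK⟩ := hpr
  set B := K * (#hr.toFinset + 1)
  have hbound : Nat.count p (Nat.nth p (B + 1)) ≤ B :=
    (hK _).trans (Nat.mul_le_mul_left K (Nat.add_le_add_right (Nat.count_le_card hr _) 1))
  rw [Nat.count_nth_of_infinite hp] at hbound
  omega

theorem exists_pos_mul_sub_le (hg : LinearlyBounded id g) :
    ∃ α β : ℝ, 0 < α ∧ 0 < β ∧ ∀ n, α * n - β ≤ g n := by
  obtain ⟨K, hK⟩ := hg
  refine ⟨1 / (K + 1), 1, by positivity, one_pos, fun n => ?_⟩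
  have hn : (n : ℝ) ≤ (K + 1) * (g n + 1) := by
    have : n ≤ (K + 1) * (g n + 1) := (hK n).trans (by nlinarith)
    exact_mod_cast this
  rw [one_div_mul_eq_div, sub_le_iff_le_add, div_le_iff₀ (by positivity)]
  linarith

end LinearlyBounded

theorem cars_le (y : ℕ → Bool) (m : ℕ) : cars y m ≤ m :=
  (card_filter_le _ _).trans_eq (card_range m)

theorem cars_eq_count (y : ℕ → Bool) : cars y = Nat.count fun i => y i = true :=
  funext fun m => (Nat.count_eq_card_filter_range _ m).symm

theorem exists_pos_lt_cars_div_of_not_weaklySparse {y : ℕ → Bool} (hy : ¬weaklySparse y) :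
    ∃ ε : ℝ, 0 < ε ∧ ∀ᶠ m in atTop, ε < (cars y m : ℝ) / m := by
  set f : ℕ → ℝ := fun m => (cars y m : ℝ) / m
  have hf0 : ∀ m, 0 ≤ f m := fun m => by positivity
  have hf1 : ∀ m, f m ≤ 1 := fun m =>
    div_le_one_of_le₀ (by exact_mod_cast cars_le y m) (Nat.cast_nonneg m)
  have hpos : 0 < liminf f atTop :=
    (le_liminf_of_le (isCoboundedUnder_ge_of_le _ hf1) (Eventually.of_forall hf0)).lt_of_ne' hy
  exact ⟨_, half_pos hpos,
    eventually_lt_of_lt_liminf (half_lt_self hpos) (isBoundedUnder_of ⟨0, hf0⟩)⟩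

theorem linearlyBounded_cars_of_not_weaklySparse {y : ℕ → Bool} (hy : ¬weaklySparse y) :
    LinearlyBounded id (cars y) := by
  obtain ⟨ε, hε, hev⟩ := exists_pos_lt_cars_div_of_not_weaklySparse hy
  obtain ⟨M, hM⟩ := eventually_atTop.mp hev
  refine ⟨M + ⌈ε⁻¹⌉₊, fun m => ?_⟩
  rcases lt_or_ge m M with hm | hm
  · simp only [id]
    nlinarith
  have hεm : ε * m ≤ cars y m := by
    rcases m.eq_zero_or_pos with rfl | hm₀
    · simp
    · exact ((lt_div_iff₀ (by positivity)).1 (hM m hm)).le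
  have hmR : (m : ℝ) ≤ ⌈ε⁻¹⌉₊ * cars y m :=
    calc (m : ℝ) = ε⁻¹ * (ε * m) := by field_simp
      _ ≤ ε⁻¹ * cars y m := by gcongr
      _ ≤ ⌈ε⁻¹⌉₊ * cars y m := by gcongr; exact Nat.le_ceil _
  have hmN : m ≤ ⌈ε⁻¹⌉₊ * cars y m := by exact_mod_cast hmR
  simp only [id]
  nlinarith

theorem linearlyBounded_count_eq_of_not_weaklySparse {y : ℕ → Bool} (h₁ : ¬weaklySparse y)
    (h₀ : ¬weaklySparse fun i => !y i) (b : Bool) :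
    LinearlyBounded id (Nat.count fun i => y i = b) := by
  cases b
  · convert linearlyBounded_cars_of_not_weaklySparse h₀ using 1
    rw [cars_eq_count]
    congr! 2 with i
    simp
  · simpa [cars_eq_count] using linearlyBounded_cars_of_not_weaklySparse h₁

theorem count_comp_nth_count (p r : ℕ → Prop) [DecidablePred p] [DecidablePred r] (n : ℕ) :
    Nat.count (fun i => r (Nat.nth p i)) (Nat.count p n) = Nat.count (fun t => p t ∧ r t) n := by
  induction n with
  | zero => simp
  | succ n ih =>
    by_cases hn : p n
    · simp [Nat.count_succ, hn, Nat.nth_count hn, ih]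
    · simp [Nat.count_succ, hn, ih]

theorem count_succ_le_add_one (p : ℕ → Prop) [DecidablePred p] (n : ℕ) :
    Nat.count p (n + 1) ≤ Nat.count p n + 1 := by
  rw [Nat.count_succ]
  split_ifs <;> omega

section Automaton

variable {Q : Type*} [DecidableEq Q] (Δ : Q → Bool → Q) (s : Q) (x : ℕ → Bool)

def visits (q : Q) : ℕ → ℕ :=
  Nat.count fun t => autoRun Δ s x t = q

theorem count_autoRun_eq_and_le_visits (q : Q) (b : Bool) (n : ℕ) :
    Nat.count (fun t => autoRun Δ s x t = q ∧ x t = b) n ≤ visits Δ s x (Δ q b) n + 1 :=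
  calc Nat.count (fun t => autoRun Δ s x t = q ∧ x t = b) n
      ≤ Nat.count (fun t => autoRun Δ s x (t + 1) = Δ q b) n :=
        Nat.count_mono_left fun t _ ⟨hq, hb⟩ => by rw [autoRun, hq, hb]
    _ ≤ visits Δ s x (Δ q b) (n + 1) := by rw [visits, Nat.count_succ']; exact Nat.le_add_right _ _
    _ ≤ visits Δ s x (Δ q b) n + 1 := count_succ_le_add_one _ n

theorem linearlyBounded_visits_transition {q : Q} (h₁ : ¬weaklySparse (subseqAt Δ s x q))
    (h₀ : ¬weaklySparse fun i => !subseqAt Δ s x q i) (b : Bool) :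
    LinearlyBounded (visits Δ s x q) (visits Δ s x (Δ q b)) := by
  have hbits := (linearlyBounded_count_eq_of_not_weaklySparse h₁ h₀ b).comp (visits Δ s x q)
  rw [show (Nat.count fun i => subseqAt Δ s x q i = b) ∘ visits Δ s x q
      = Nat.count fun t => autoRun Δ s x t = q ∧ x t = b from
    funext (count_comp_nth_count (fun t => autoRun Δ s x t = q) (fun t => x t = b))] at hbits
  exact hbits.trans (.of_le_add 1 (count_autoRun_eq_and_le_visits Δ s x q b))

variable {Δ s x}

theorem linearlyBounded_visits_autoRun
    (h : ∀ q : Q, {t : ℕ | autoRun Δ s x t = q}.Infinite →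
      ¬weaklySparse (subseqAt Δ s x q) ∧ ¬weaklySparse (fun i => !subseqAt Δ s x q i))
    {t₀ t₁ : ℕ} (ht : t₀ ≤ t₁) (h₀ : {t : ℕ | autoRun Δ s x t = autoRun Δ s x t₀}.Infinite) :
    {t : ℕ | autoRun Δ s x t = autoRun Δ s x t₁}.Infinite ∧
      LinearlyBounded (visits Δ s x (autoRun Δ s x t₀)) (visits Δ s x (autoRun Δ s x t₁)) := by
  induction t₁, ht using Nat.le_induction with
  | base => exact ⟨h₀, .refl _⟩
  | succ t _ ih =>
    obtain ⟨hinf, hbound⟩ := ih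
    have hstep := linearlyBounded_visits_transition Δ s x (h _ hinf).1 (h _ hinf).2 (x t)
    exact ⟨hstep.infinite_setOf hinf, hbound.trans hstep⟩

theorem linearlyBounded_visits
    (h : ∀ q : Q, {t : ℕ | autoRun Δ s x t = q}.Infinite →
      ¬weaklySparse (subseqAt Δ s x q) ∧ ¬weaklySparse (fun i => !subseqAt Δ s x q i))
    {q : Q} (hq : {t : ℕ | autoRun Δ s x t = q}.Infinite) (q' : Q) :
    LinearlyBounded (visits Δ s x q') (visits Δ s x q) := by
  by_cases hq' : {t : ℕ | autoRun Δ s x t = q'}.Infinite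
  · obtain ⟨t₀, rfl⟩ := hq'.nonempty
    obtain ⟨t₁, rfl, ht⟩ := hq.exists_gt t₀
    exact (linearlyBounded_visits_autoRun h ht.le hq').2
  · exact .of_le_add _ fun n =>
      (Nat.count_le_card (Set.not_infinite.mp hq') n).trans (Nat.le_add_left _ _)

theorem sum_visits [Fintype Q] (n : ℕ) : ∑ q : Q, visits Δ s x q n = n := by
  simp only [visits, Nat.count_eq_card_filter_range]
  exact (card_eq_sum_card_fiberwise fun t _ => mem_univ (autoRun Δ s x t)).symm.trans
    (card_range n)

end Automaton

/-- The contrapositive step in the proof of Lemma 4.3: if for every state `q` visited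
infinitely often on `x` the subsequence `x^{(q)}` is neither weakly sparse nor co-weakly
sparse, then every state `q` visited infinitely often is *frequent* on `x`: there are
`α, β > 0` with `|{t < T : q_t(x) = q}| ≥ αT - β` for all `T ∈ ℕ`. -/
theorem infinitely_visited_states_frequent {Q : Type} [Fintype Q] [DecidableEq Q]
    (s : Q) (Δ : Q → Bool → Q) (x : ℕ → Bool)
    (h : ∀ q : Q, {t : ℕ | autoRun Δ s x t = q}.Infinite →
      ¬weaklySparse (subseqAt Δ s x q) ∧ ¬weaklySparse (fun i => !subseqAt Δ s x q i)) :
    ∀ q : Q, {t : ℕ | autoRun Δ s x t = q}.Infinite →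
      ∃ α β : ℝ, 0 < α ∧ 0 < β ∧ ∀ T : ℕ, 1 ≤ T →
        α * T - β ≤ (((Finset.range T).filter (fun t => autoRun Δ s x t = q)).card : ℝ) := by
  intro q hq
  have hlin : LinearlyBounded id (visits Δ s x q) := by
    convert LinearlyBounded.sum univ fun q' _ => linearlyBounded_visits h hq q' using 1
    exact funext fun n => (sum_visits n).symm
  obtain ⟨α, β, hα, hβ, hbound⟩ := hlin.exists_pos_mul_sub_le
  refine ⟨α, β, hα, hβ, fun T _ => ?_⟩
  simpa only [visits, Nat.count_eq_card_filter_range] using hbound T
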